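/- Fix nonzero integers h, k with gcd(h, h+k) = 1 and gcd(k, h+k) = 1, and for u ∈ (0,1) let γ_u(t) = (2/π)·( (u√(1−u²)/(h+k))·sin((h+k)πt), −(u/k)·cos(kπt) + (√(1−u²)/h)·cos(hπt), (u/k)·sin(kπt) + (√(1−u²)/h)·sin(hπt) ). If there exist t₀, t₁ with 0 ≤ t₀ < t₁ < 2 and γ_u(t₀) = γ_u(t₁), then u = √(k²/(h²+k²)). (The base curve γ_u is nonembedded for exactly one parameter value u in (0,1).) -/

import Mathlib

noncomputable section

/-- The explicit curve `γ_u` of the one-parameter family of critical framed curves,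
for parameters `h, k` and `u ∈ [0,1]`. -/
def gammaU (h k : ℤ) (u : ℝ) (t : ℝ) : EuclideanSpace ℝ (Fin 3) :=
  WithLp.toLp 2 ![(2 / Real.pi) * (u * Real.sqrt (1 - u ^ 2) / ((h : ℝ) + (k : ℝ)) *
      Real.sin (((h : ℝ) + (k : ℝ)) * Real.pi * t)),
    (2 / Real.pi) * (-(u / (k : ℝ)) * Real.cos ((k : ℝ) * Real.pi * t) +
      Real.sqrt (1 - u ^ 2) / (h : ℝ) * Real.cos ((h : ℝ) * Real.pi * t)),
    (2 / Real.pi) * ((u / (k : ℝ)) * Real.sin ((k : ℝ) * Real.pi * t) +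
      Real.sqrt (1 - u ^ 2) / (h : ℝ) * Real.sin ((h : ℝ) * Real.pi * t))]

/-! Write `t₀ = s - d`, `t₁ = s + d` with `0 < d < 1`. The last two coordinates of `γ_u` are the
planar curve `-(u/k) e^{-ikπt} + (√(1-u²)/h) e^{ihπt}`, so the self-intersection reads
`A e^{-ikπs} = -B e^{ihπs}` with `A = (u/k) sin(kπd)`, `B = (√(1-u²)/h) sin(hπd)`; hence `A² = B²` and
`A cos((h+k)πs) = -B`. Since `h, k` are coprime, `sin(kπd)` and `sin(hπd)` cannot both vanish, so
`A, B ≠ 0`. The first coordinate gives `cos((h+k)πs) sin((h+k)πd) = 0`, so `sin((h+k)πd) = 0`, which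
makes `sin²(hπd) = sin²(kπd)`, and `A² = B²` becomes `(u/k)² = (1-u²)/h²`. -/

open Real Set

theorem exists_intCast_eq_of_sin_mul_pi_eq_zero {h k : ℤ} (hc : IsCoprime h k) {d : ℝ}
    (hh : sin (h * π * d) = 0) (hk : sin (k * π * d) = 0) : ∃ n : ℤ, d = n := by
  obtain ⟨m, hm⟩ := sin_eq_zero_iff.mp hh
  obtain ⟨n, hn⟩ := sin_eq_zero_iff.mp hk
  obtain ⟨a, b, hab⟩ := hc
  have hm' : (m : ℝ) = h * d := mul_right_cancel₀ pi_ne_zero (by rw [hm]; ring)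
  have hn' : (n : ℝ) = k * d := mul_right_cancel₀ pi_ne_zero (by rw [hn]; ring)
  have hab' : (a : ℝ) * h + b * k = 1 := by exact_mod_cast hab
  refine ⟨a * m + b * n, ?_⟩
  push_cast
  rw [hm', hn']
  linear_combination (-d) * hab'

theorem sin_mul_pi_ne_zero_of_isCoprime {h k : ℤ} (hc : IsCoprime h k) {d : ℝ} (hd : d ∈ Ioo 0 1)
    (hh : sin (h * π * d) = 0) : sin (k * π * d) ≠ 0 := fun hk ↦ by
  obtain ⟨n, rfl⟩ := exists_intCast_eq_of_sin_mul_pi_eq_zero hc hh hk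
  have : 0 < n := by exact_mod_cast hd.1
  have : n < 1 := by exact_mod_cast hd.2
  omega

theorem sin_sq_eq_sin_sq_of_sin_add_eq_zero {x y : ℝ} (h : sin (x + y) = 0) :
    sin y ^ 2 = sin x ^ 2 := by
  have hy : sin y = -(cos (x + y) * sin x) := by
    simpa [h] using sin_sub (x + y) x
  have hc : cos (x + y) ^ 2 = 1 := by nlinarith [sin_sq_add_cos_sq (x + y)]
  rw [hy, neg_sq, mul_pow, hc, one_mul]

section
variable {a b x y : ℝ}

theorem mul_cos_add_eq_neg_of_mul_sin_eq (hs : a * sin x = b * sin y)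
    (hc : a * cos x = -(b * cos y)) : a * cos (x + y) = -b := by
  rw [cos_add]
  linear_combination cos y * hc - sin y * hs - b * sin_sq_add_cos_sq y

theorem sq_eq_sq_of_mul_sin_eq (hs : a * sin x = b * sin y)
    (hc : a * cos x = -(b * cos y)) : a ^ 2 = b ^ 2 := by
  linear_combination (-a ^ 2) * sin_sq_add_cos_sq x + b ^ 2 * sin_sq_add_cos_sq y +
    (a * sin x + b * sin y) * hs + (a * cos x - b * cos y) * hc

end

theorem eq_sqrt_div_of_div_sq_eq {u a b : ℝ} (hu₀ : 0 ≤ u) (hu₁ : u ≤ 1) (ha : a ≠ 0) (hb : b ≠ 0)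
    (h : (u / b) ^ 2 = (√(1 - u ^ 2) / a) ^ 2) : u = √(b ^ 2 / (a ^ 2 + b ^ 2)) := by
  rw [div_pow, div_pow, sq_sqrt (by nlinarith), div_eq_div_iff (by positivity) (by positivity)] at h
  rw [eq_comm, sqrt_eq_iff_eq_sq (by positivity) hu₀, div_eq_iff (by positivity)]
  linarith

section
variable {h k : ℤ} {u s d : ℝ}

theorem cos_mul_sin_eq_zero_of_gammaU_eq (hhk : (h : ℝ) + k ≠ 0) (hu : u ∈ Ioo 0 1)
    (heq : gammaU h k u (s - d) = gammaU h k u (s + d)) :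
    cos (k * π * s + h * π * s) * sin (k * π * d + h * π * d) = 0 := by
  have e := congrArg (· 0) heq
  simp only [gammaU, PiLp.toLp_apply, Matrix.cons_val_zero] at e
  have hc : u * √(1 - u ^ 2) / (h + k) ≠ 0 :=
    div_ne_zero (mul_ne_zero hu.1.ne' (sqrt_pos.mpr (by nlinarith [hu.1, hu.2])).ne') hhk
  have e' := mul_left_cancel₀ hc (mul_left_cancel₀ (by positivity) e)
  rw [show ((h : ℝ) + k) * π * (s - d) = (k * π * s + h * π * s) - (k * π * d + h * π * d) by ring,
    show ((h : ℝ) + k) * π * (s + d) = (k * π * s + h * π * s) + (k * π * d + h * π * d) by ring,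
    sin_sub (k * π * s + h * π * s), sin_add (k * π * s + h * π * s)] at e'
  linarith

theorem mul_sin_eq_and_mul_cos_eq_neg_of_gammaU_eq
    (heq : gammaU h k u (s - d) = gammaU h k u (s + d)) :
    u / k * sin (k * π * d) * sin (k * π * s) = √(1 - u ^ 2) / h * sin (h * π * d) * sin (h * π * s) ∧
    u / k * sin (k * π * d) * cos (k * π * s) =
      -(√(1 - u ^ 2) / h * sin (h * π * d) * cos (h * π * s)) := by
  have e₁ := congrArg (· 1) heq
  have e₂ := congrArg (· 2) heq
  simp only [gammaU, PiLp.toLp_apply, Matrix.cons_val_one, Matrix.cons_val_two, Matrix.head_cons,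
    Matrix.tail_cons] at e₁ e₂
  replace e₁ := mul_left_cancel₀ (by positivity) e₁
  replace e₂ := mul_left_cancel₀ (by positivity) e₂
  simp only [mul_sub, mul_add, sin_sub, sin_add, cos_sub, cos_add] at e₁ e₂
  constructor
  · linear_combination (-1 / 2 : ℝ) * e₁
  · linear_combination (-1 / 2 : ℝ) * e₂

end

theorem gammaU_nonembedded_value_general
    (h k : ℤ) (hh : h ≠ 0) (hk : k ≠ 0) (hhk : h + k ≠ 0)
    (hg₁ : Int.gcd h (h + k) = 1)
    (u : ℝ) (hu : u ∈ Set.Ioo (0 : ℝ) 1)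
    (t₀ t₁ : ℝ) (ht₀ : 0 ≤ t₀) (ht : t₀ < t₁) (ht₁ : t₁ < 2)
    (hself : gammaU h k u t₀ = gammaU h k u t₁) :
    u = Real.sqrt ((k : ℝ) ^ 2 / ((h : ℝ) ^ 2 + (k : ℝ) ^ 2)) := by
  have hcop : IsCoprime h k := IsCoprime.of_add_mul_left_right (z := 1) <| by
    rw [mul_one, add_comm]
    exact Int.isCoprime_iff_gcd_eq_one.mpr hg₁
  have hhR : (h : ℝ) ≠ 0 := by exact_mod_cast hh
  have hkR : (k : ℝ) ≠ 0 := by exact_mod_cast hk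
  have hv : 0 < √(1 - u ^ 2) := sqrt_pos.mpr (by nlinarith [hu.1, hu.2])
  obtain ⟨s, d, rfl, rfl, hd₀, hd₁⟩ : ∃ s d : ℝ, t₀ = s - d ∧ t₁ = s + d ∧ 0 < d ∧ d < 1 :=
    ⟨(t₀ + t₁) / 2, (t₁ - t₀) / 2, by ring, by ring, by linarith, by linarith⟩
  obtain ⟨hsin, hcos⟩ := mul_sin_eq_and_mul_cos_eq_neg_of_gammaU_eq hself
  have hAB := mul_cos_add_eq_neg_of_mul_sin_eq hsin hcos
  have hsq := sq_eq_sq_of_mul_sin_eq hsin hcos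
  have hy : sin (k * π * d) ≠ 0 := fun hy ↦
    sin_mul_pi_ne_zero_of_isCoprime hcop ⟨hd₀, hd₁⟩ (by simpa [hy, hv.ne', hhR] using hAB) hy
  have hyY : sin (k * π * d + h * π * d) = 0 := by
    refine (mul_eq_zero.mp (cos_mul_sin_eq_zero_of_gammaU_eq (by exact_mod_cast hhk) hu hself)
      ).resolve_left fun hθ => ?_
    rw [hθ, mul_zero, eq_comm, neg_eq_zero] at hAB
    rw [hAB, zero_pow two_ne_zero, sq_eq_zero_iff] at hsq
    exact mul_ne_zero (div_ne_zero hu.1.ne' hkR) hy hsq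
  refine eq_sqrt_div_of_div_sq_eq hu.1.le hu.2.le hhR hkR (mul_right_cancel₀ (pow_ne_zero 2 hy) ?_)
  rw [← mul_pow, hsq, mul_pow, sin_sq_eq_sin_sq_of_sin_add_eq_zero hyY]

/-- Within the one-parameter family of critical framed curves, the base curve `γ_u` is
nonembedded for exactly one parameter value: if `gcd(h, h+k) = gcd(k, h+k) = 1` and
`γ_u` has a self-intersection on `[0,2)`, then `u = √(k²/(h²+k²))`. -/
theorem gammaU_nonembedded_value
    (h k : ℤ) (hh : h ≠ 0) (hk : k ≠ 0) (hhk : h + k ≠ 0)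
    (hg₁ : Int.gcd h (h + k) = 1) (hg₂ : Int.gcd k (h + k) = 1)
    (u : ℝ) (hu : u ∈ Set.Ioo (0 : ℝ) 1)
    (t₀ t₁ : ℝ) (ht₀ : 0 ≤ t₀) (ht : t₀ < t₁) (ht₁ : t₁ < 2)
    (hself : gammaU h k u t₀ = gammaU h k u t₁) :
    u = Real.sqrt ((k : ℝ) ^ 2 / ((h : ℝ) ^ 2 + (k : ℝ) ^ 2)) :=
  gammaU_nonembedded_value_general h k hh hk hhk hg₁ u hu t₀ t₁ ht₀ ht ht₁ hself
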